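/- arXiv:2503.20762 — 2 statements merged into one kernel-verified Lean document; each statement's English description precedes it below -/
import Mathlib

section
/- Under the setting of the ASGO nonsmooth convergence theorem (convex f with minimizer W_*, updates V_t = V_{t-1} + G_t G_tᵀ, Λ_t = V_t^{1/2} + ε I_m, W_{t+1} = W_t - η Λ_t^{-1} G_t with η = D_op, and ‖W_t - W_*‖_op ≤ D_op, ‖W_t - W_*‖_F ≤ D_F almost surely), if in addition there is a symmetric positive definite Q ∈ R^{m×m} with E[G_t G_tᵀ] ⪯ Q² for every t, then there is an absolute constant C such that (1/T) Σ_{t=0}^{T-1} E[f(W_t)] - f(W_*) ≤ C ( ‖Q‖_* D_op / √T + ε D_F² / (D_op T) ). -/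
open Matrix MeasureTheory
open scoped Classical

/-- The positive semidefinite square root of a positive semidefinite real matrix
(junk value `0` if the matrix is not positive semidefinite). -/
noncomputable def psdSqrt {k : ℕ} (X : Matrix (Fin k) (Fin k) ℝ) : Matrix (Fin k) (Fin k) ℝ :=
  if h : X.PosSemidef then
    (h.1.eigenvectorUnitary : Matrix (Fin k) (Fin k) ℝ) *
      diagonal (Real.sqrt ∘ h.1.eigenvalues) *
      (star h.1.eigenvectorUnitary : Matrix (Fin k) (Fin k) ℝ)
  else 0

/-- The trace (nuclear) norm of a real matrix: the sum of its singular values,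
i.e. `tr((Aᵀ A)^{1/2})`. -/
noncomputable def nuclearNorm {m n : ℕ} (A : Matrix (Fin m) (Fin n) ℝ) : ℝ :=
  (psdSqrt (Aᵀ * A)).trace

/-- The spectral norm (largest singular value) of a real matrix, i.e. the operator norm
of the induced linear map between Euclidean spaces. -/
noncomputable def matSpectralNorm {m n : ℕ} (A : Matrix (Fin m) (Fin n) ℝ) : ℝ :=
  ‖LinearMap.toContinuousLinearMap (Matrix.toEuclideanLin (𝕜 := ℝ) A)‖

/-- The Frobenius norm of a real matrix. -/
noncomputable def frobeniusNorm {m n : ℕ} (A : Matrix (Fin m) (Fin n) ℝ) : ℝ :=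
  Real.sqrt (∑ i, ∑ j, (A i j) ^ 2)

/-!
Write `D_t = W_t - W_*`. One preconditioned step gives the identity
`2η tr(G_tᵀ D_t) = tr(D_tᵀ Λ_t D_t) - tr(D_{t+1}ᵀ Λ_t D_{t+1}) + η² tr(Λ_t⁻¹ G_t G_tᵀ)`.
Since `Λ_t ⪰ Λ_{t-1}` and `‖D_t‖_op ≤ η`, replacing `Λ_t` by `Λ_{t-1}` in the first term costs at
most `η² tr(Λ_t - Λ_{t-1})`; since `Λ_t² - Λ_{t-1}² ⪰ G_t G_tᵀ`, the last term is at most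
`2η² tr(Λ_t - Λ_{t-1})`. Telescoping bounds the regret `∑_t tr(G_tᵀ D_t)` pathwise by
`(3/2) η tr V_T^{1/2} + ε D_F² / (2η)`. As `W_t` is `ℱ_t`-measurable, the regret dominates
`∑_t E f(W_t) - T f(W_*)` in expectation, and the variational formula
`tr X^{1/2} ≤ (tr(M⁻¹ X) + tr M) / 2` with `M = √T Q` gives `E tr V_T^{1/2} ≤ √T tr Q`.
-/

section

variable {k m n : ℕ} {ι κ : Type*} [Fintype ι] [Fintype κ]
  {Ω : Type*} {mΩ : MeasurableSpace Ω} {μ : Measure Ω}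

open scoped MatrixOrder

namespace Matrix

lemma IsHermitian.transpose_eq {α : Type*} {A : Matrix α α ℝ} (hA : A.IsHermitian) : Aᵀ = A := by
  rw [← conjTranspose_eq_transpose_of_trivial]; exact hA

lemma posSemidef_mul_transpose_self (A : Matrix ι κ ℝ) : (A * Aᵀ).PosSemidef := by
  simpa [conjTranspose_eq_transpose_of_trivial] using posSemidef_self_mul_conjTranspose A

lemma PosSemidef.transpose_mul_mul_same {A : Matrix ι ι ℝ} (hA : A.PosSemidef)
    (D : Matrix ι κ ℝ) : (Dᵀ * A * D).PosSemidef := by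
  simpa [conjTranspose_eq_transpose_of_trivial] using hA.conjTranspose_mul_mul_same D

lemma trace_transpose_mul_eq_sum (A B : Matrix ι κ ℝ) :
    (Aᵀ * B).trace = ∑ i, ∑ j, A i j * B i j := by
  rw [trace, Finset.sum_comm]
  simp [mul_apply]

lemma PosSemidef.trace_mul_nonneg [DecidableEq ι] {A B : Matrix ι ι ℝ} (hA : A.PosSemidef)
    (hB : B.PosSemidef) : 0 ≤ (A * B).trace := by
  obtain ⟨X, rfl⟩ := CStarAlgebra.nonneg_iff_eq_star_mul_self.mp hA.nonneg
  rw [Matrix.mul_assoc, trace_mul_comm, Matrix.mul_assoc]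
  have := (hB.mul_mul_conjTranspose_same X).trace_nonneg
  rwa [Matrix.mul_assoc, ← star_eq_conjTranspose] at this

lemma PosSemidef.trace_mul_le_trace_mul [DecidableEq ι] {A B C : Matrix ι ι ℝ} (hC : C.PosSemidef)
    (hAB : (B - A).PosSemidef) : (C * A).trace ≤ (C * B).trace := by
  have := hC.trace_mul_nonneg hAB
  rwa [Matrix.mul_sub, trace_sub, sub_nonneg] at this

/-- The two sides differ by `tr((P - M) M⁻¹ (P - M)) ≥ 0`. -/
lemma PosDef.two_mul_trace_sub_trace_le [DecidableEq ι] {M P : Matrix ι ι ℝ} (hM : M.PosDef)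
    (hP : P.IsHermitian) : 2 * P.trace - M.trace ≤ (M⁻¹ * (P * P)).trace := by
  have hdet : IsUnit M.det := hM.det_pos.ne'.isUnit
  have hpsd : ((P - M) * M⁻¹ * (P - M)).PosSemidef := by
    simpa [conjTranspose_eq_transpose_of_trivial, (hP.sub hM.isHermitian).transpose_eq]
      using hM.inv.posSemidef.mul_mul_conjTranspose_same (P - M)
  have hexp : ((P - M) * M⁻¹ * (P - M)).trace
      = (M⁻¹ * (P * P)).trace - 2 * P.trace + M.trace := by
    simp only [Matrix.sub_mul, Matrix.mul_sub, trace_sub, Matrix.mul_assoc,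
      mul_nonsing_inv M hdet, nonsing_inv_mul M hdet, Matrix.one_mul, Matrix.mul_one]
    rw [trace_mul_comm P, Matrix.mul_assoc]
    ring
  linarith [hpsd.trace_nonneg]

lemma posSemidef_sum_mul_transpose (G : ℕ → Matrix ι κ ℝ)
    (t : ℕ) : (∑ s ∈ Finset.range t, G s * (G s)ᵀ).PosSemidef :=
  posSemidef_sum _ fun s _ => posSemidef_mul_transpose_self (G s)

end Matrix

lemma psdSqrt_eq_cfcSqrt {X : Matrix (Fin k) (Fin k) ℝ} (hX : X.PosSemidef) :
    psdSqrt X = CFC.sqrt X := by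
  rw [CFC.sqrt_eq_real_sqrt X hX.nonneg, cfcₙ_eq_cfc, hX.1.cfc_eq, psdSqrt, dif_pos hX]
  rfl

lemma Matrix.PosSemidef.psdSqrt {X : Matrix (Fin k) (Fin k) ℝ} (hX : X.PosSemidef) :
    (psdSqrt X).PosSemidef := by
  rw [psdSqrt_eq_cfcSqrt hX]; exact (CFC.sqrt_nonneg X).posSemidef

lemma psdSqrt_mul_self {X : Matrix (Fin k) (Fin k) ℝ} (hX : X.PosSemidef) :
    psdSqrt X * psdSqrt X = X := by
  rw [psdSqrt_eq_cfcSqrt hX]; exact CFC.sqrt_mul_sqrt_self X hX.nonneg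

lemma psdSqrt_zero : psdSqrt (0 : Matrix (Fin k) (Fin k) ℝ) = 0 := by
  rw [psdSqrt_eq_cfcSqrt PosSemidef.zero, CFC.sqrt_zero]

lemma nuclearNorm_eq_trace {S : Matrix (Fin k) (Fin k) ℝ} (hS : S.PosSemidef) :
    nuclearNorm S = S.trace := by
  rw [nuclearNorm, hS.1.transpose_eq, psdSqrt_eq_cfcSqrt (by simpa [sq] using hS.pow 2),
    CFC.sqrt_unique rfl hS.nonneg]

/-- Along an eigenvector `v` of `X - Y` with eigenvalue `λ`, the identity
`X² - Y² = X (X - Y) + (X - Y) Y` gives `vᵀ(X² - Y²)v = λ (vᵀXv + vᵀYv)`, which is negative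
if `λ < 0`. -/
lemma Matrix.PosSemidef.sub_of_mul_self_sub [DecidableEq ι] {X Y : Matrix ι ι ℝ}
    (hX : X.PosSemidef) (hY : Y.PosSemidef) (h : (X * X - Y * Y).PosSemidef) :
    (X - Y).PosSemidef := by
  have hH : (X - Y).IsHermitian := hX.1.sub hY.1
  refine hH.posSemidef_iff_eigenvalues_nonneg.mpr fun i => ?_
  by_contra! hneg
  replace hneg : hH.eigenvalues i < 0 := hneg
  have hvv : 0 < (hH.eigenvectorBasis i).ofLp ⬝ᵥ (hH.eigenvectorBasis i).ofLp := by
    simpa [dotProduct_star_self_pos_iff] using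
      (dotProduct_star_self_pos_iff (v := (hH.eigenvectorBasis i).ofLp)).2
        (by simpa using hH.eigenvectorBasis.orthonormal.ne_zero i)
  set lam := hH.eigenvalues i
  set v : ι → ℝ := ⇑(hH.eigenvectorBasis i)
  have hv : (X - Y) *ᵥ v = lam • v := hH.mulVec_eigenvectorBasis i
  have hv' : v ᵥ* (X - Y) = lam • v := by rw [← mulVec_transpose, hH.transpose_eq, hv]
  have hquad : v ⬝ᵥ ((X * X - Y * Y) *ᵥ v) = lam * (v ⬝ᵥ (X *ᵥ v) + v ⬝ᵥ (Y *ᵥ v)) := by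
    have : X * X - Y * Y = X * (X - Y) + (X - Y) * Y := by noncomm_ring
    rw [this, add_mulVec, ← mulVec_mulVec, ← mulVec_mulVec, dotProduct_add, hv,
      dotProduct_mulVec v (X - Y), hv', mulVec_smul, dotProduct_smul, smul_dotProduct]
    simp only [smul_eq_mul]; ring
  have hdiff : v ⬝ᵥ (X *ᵥ v) - v ⬝ᵥ (Y *ᵥ v) = lam * (v ⬝ᵥ v) := by
    rw [← dotProduct_sub, ← sub_mulVec, hv, dotProduct_smul, smul_eq_mul]
  have hXY := h.dotProduct_mulVec_nonneg v
  have hXv := hX.dotProduct_mulVec_nonneg v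
  have hYv := hY.dotProduct_mulVec_nonneg v
  simp only [star_trivial] at hXY hXv hYv
  have hsum : 0 < v ⬝ᵥ (X *ᵥ v) + v ⬝ᵥ (Y *ᵥ v) := by nlinarith
  nlinarith [mul_neg_of_neg_of_pos hneg hsum]

lemma psdSqrt_sub_psdSqrt {A B : Matrix (Fin k) (Fin k) ℝ} (hA : A.PosSemidef)
    (hAB : (B - A).PosSemidef) : (psdSqrt B - psdSqrt A).PosSemidef := by
  have hB : B.PosSemidef := by simpa using hA.add hAB
  refine hB.psdSqrt.sub_of_mul_self_sub hA.psdSqrt ?_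
  rwa [psdSqrt_mul_self hA, psdSqrt_mul_self hB]

lemma trace_psdSqrt_le {A M : Matrix (Fin k) (Fin k) ℝ} (hA : A.PosSemidef) (hM : M.PosDef) :
    (psdSqrt A).trace ≤ ((M⁻¹ * A).trace + M.trace) / 2 := by
  have := hM.two_mul_trace_sub_trace_le hA.psdSqrt.1
  rw [psdSqrt_mul_self hA] at this
  linarith

lemma dotProduct_self_eq_norm_sq (x : Fin n → ℝ) :
    x ⬝ᵥ x = ‖(EuclideanSpace.equiv (Fin n) ℝ).symm x‖ ^ 2 := by
  rw [EuclideanSpace.norm_eq, Real.sq_sqrt (by positivity)]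
  simp [dotProduct, sq]

open scoped Matrix.Norms.L2Operator in
lemma sq_smul_one_sub_mul_transpose_posSemidef (D : Matrix (Fin m) (Fin n) ℝ) {c : ℝ}
    (hD : matSpectralNorm D ≤ c) :
    (c ^ 2 • (1 : Matrix (Fin m) (Fin m) ℝ) - D * Dᵀ).PosSemidef := by
  refine .of_dotProduct_mulVec_nonneg ?_ fun x => ?_
  · simp [IsHermitian, conjTranspose_eq_transpose_of_trivial, transpose_sub]
  have hnorm : ‖(EuclideanSpace.equiv (Fin n) ℝ).symm (Dᵀ *ᵥ x)‖
      ≤ ‖D‖ * ‖(EuclideanSpace.equiv (Fin m) ℝ).symm x‖ := by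
    have hT : ‖Dᵀ‖ = ‖D‖ := by
      simpa [conjTranspose_eq_transpose_of_trivial] using l2_opNorm_conjTranspose D
    simpa [hT] using l2_opNorm_mulVec Dᵀ ((EuclideanSpace.equiv (Fin m) ℝ).symm x)
  have hquad : x ⬝ᵥ ((D * Dᵀ) *ᵥ x) = (Dᵀ *ᵥ x) ⬝ᵥ (Dᵀ *ᵥ x) := by
    rw [← mulVec_mulVec, dotProduct_mulVec, ← mulVec_transpose]
  have hc : ‖D‖ ≤ c := hD
  rw [star_trivial, sub_mulVec, dotProduct_sub, smul_mulVec, one_mulVec, dotProduct_smul,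
    smul_eq_mul, hquad, dotProduct_self_eq_norm_sq, dotProduct_self_eq_norm_sq, sub_nonneg]
  calc _ ≤ (‖D‖ * ‖(EuclideanSpace.equiv (Fin m) ℝ).symm x‖) ^ 2 := by gcongr
    _ ≤ _ := by rw [mul_pow]; gcongr

lemma trace_transpose_mul_mul_le {D : Matrix (Fin m) (Fin n) ℝ} {M : Matrix (Fin m) (Fin m) ℝ}
    (hM : M.PosSemidef) {c : ℝ} (hD : matSpectralNorm D ≤ c) :
    (Dᵀ * M * D).trace ≤ c ^ 2 * M.trace := by
  have := hM.trace_mul_le_trace_mul (sq_smul_one_sub_mul_transpose_posSemidef D hD)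
  rwa [Matrix.mul_smul, Matrix.mul_one, trace_smul, smul_eq_mul, ← Matrix.mul_assoc,
    trace_mul_comm, ← Matrix.mul_assoc] at this

lemma trace_transpose_mul_self_eq_frobeniusNorm_sq (D : Matrix (Fin m) (Fin n) ℝ) :
    (Dᵀ * D).trace = frobeniusNorm D ^ 2 := by
  rw [frobeniusNorm, Real.sq_sqrt (by positivity), trace_transpose_mul_eq_sum]
  simp [sq]

lemma abs_apply_le_frobeniusNorm (D : Matrix (Fin m) (Fin n) ℝ) (i : Fin m) (j : Fin n) :
    |D i j| ≤ frobeniusNorm D := by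
  rw [← Real.sqrt_sq_eq_abs, frobeniusNorm]
  gcongr
  calc D i j ^ 2 ≤ ∑ j', D i j' ^ 2 :=
        Finset.single_le_sum (fun j' _ => sq_nonneg (D i j')) (Finset.mem_univ j)
    _ ≤ ∑ i', ∑ j', D i' j' ^ 2 :=
        Finset.single_le_sum (f := fun i' => ∑ j', D i' j' ^ 2)
          (fun i' _ => by positivity) (Finset.mem_univ i)

lemma two_mul_trace_transpose_mul_eq [DecidableEq ι] {Λ : Matrix ι ι ℝ} (hΛ : Λ.IsHermitian)
    (hdet : IsUnit Λ.det) (η : ℝ) (G D : Matrix ι κ ℝ) :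
    2 * η * (Gᵀ * D).trace = (Dᵀ * Λ * D).trace
      - ((D - η • (Λ⁻¹ * G))ᵀ * Λ * (D - η • (Λ⁻¹ * G))).trace
      + η ^ 2 * (Λ⁻¹ * (G * Gᵀ)).trace := by
  have hsymm : (Λ⁻¹)ᵀ = Λ⁻¹ := by rw [transpose_nonsing_inv, hΛ.transpose_eq]
  have hGD : (Dᵀ * G).trace = (Gᵀ * D).trace := by
    rw [← trace_transpose, transpose_mul, transpose_transpose]
  have hq : (Gᵀ * (Λ⁻¹ * G)).trace = (Λ⁻¹ * (G * Gᵀ)).trace := by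
    rw [trace_mul_comm, Matrix.mul_assoc]
  simp only [transpose_sub, transpose_smul, transpose_mul, hsymm, Matrix.sub_mul, Matrix.mul_sub,
    Matrix.smul_mul, Matrix.mul_smul, trace_sub, trace_smul, Matrix.mul_assoc,
    mul_nonsing_inv_cancel_left Λ _ hdet, nonsing_inv_mul_cancel_left Λ _ hdet, smul_eq_mul]
  rw [hGD, hq]
  ring

/-- `tr(Λ⁻¹ A) ≤ tr(Λ⁻¹ (Λ² - P²)) = tr Λ - tr(Λ⁻¹ P²)`, and `tr(Λ⁻¹ P²) ≥ 2 tr P - tr Λ`. -/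
lemma trace_inv_mul_le_two_mul_trace_sub [DecidableEq ι] {Λ P A : Matrix ι ι ℝ} (hΛ : Λ.PosDef)
    (hP : P.IsHermitian) (hA : (Λ * Λ - P * P - A).PosSemidef) :
    (Λ⁻¹ * A).trace ≤ 2 * (Λ.trace - P.trace) := by
  have hdet : IsUnit Λ.det := hΛ.det_pos.ne'.isUnit
  have hmono := hΛ.inv.posSemidef.trace_mul_le_trace_mul hA
  rw [Matrix.mul_sub, trace_sub, nonsing_inv_mul_cancel_left Λ _ hdet] at hmono
  linarith [hΛ.two_mul_trace_sub_trace_le hP]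

lemma two_mul_trace_transpose_mul_le {Λ P : Matrix (Fin m) (Fin m) ℝ} (hΛ : Λ.PosDef)
    (hP : P.IsHermitian) (hΛP : (Λ - P).PosSemidef) {G D : Matrix (Fin m) (Fin n) ℝ}
    (hG : (Λ * Λ - P * P - G * Gᵀ).PosSemidef) {η : ℝ} (hD : matSpectralNorm D ≤ η) :
    2 * η * (Gᵀ * D).trace ≤ ((Dᵀ * P * D).trace - 3 * η ^ 2 * P.trace)
      - (((D - η • (Λ⁻¹ * G))ᵀ * Λ * (D - η • (Λ⁻¹ * G))).trace - 3 * η ^ 2 * Λ.trace) := by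
  have hstep := two_mul_trace_transpose_mul_eq hΛ.isHermitian hΛ.det_pos.ne'.isUnit η G D
  have hdrift := trace_transpose_mul_mul_le (D := D) hΛP hD
  have hgrad := trace_inv_mul_le_two_mul_trace_sub hΛ hP hG
  rw [Matrix.mul_sub, Matrix.sub_mul, trace_sub, trace_sub] at hdrift
  nlinarith [sq_nonneg η]

lemma integrable_trace_transpose_mul {A B : Ω → Matrix ι κ ℝ}
    (h : ∀ i j, Integrable (fun ω => A ω i j * B ω i j) μ) :
    Integrable (fun ω => ((A ω)ᵀ * B ω).trace) μ := by
  simp_rw [trace_transpose_mul_eq_sum]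
  exact integrable_finsetSum _ fun i _ => integrable_finsetSum _ fun j _ => h i j

lemma integral_trace_transpose_mul {A B : Ω → Matrix ι κ ℝ}
    (h : ∀ i j, Integrable (fun ω => A ω i j * B ω i j) μ) :
    ∫ ω, ((A ω)ᵀ * B ω).trace ∂μ = ∑ i, ∑ j, ∫ ω, A ω i j * B ω i j ∂μ := by
  simp_rw [trace_transpose_mul_eq_sum]
  rw [integral_finsetSum _ fun i _ => integrable_finsetSum _ fun j _ => h i j]
  exact Finset.sum_congr rfl fun i _ => integral_finsetSum _ fun j _ => h i j

lemma integral_trace_mul_left (M : Matrix ι ι ℝ) {A : Ω → Matrix ι ι ℝ}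
    (hA : ∀ i j, Integrable (fun ω => A ω i j) μ) :
    Integrable (fun ω => (M * A ω).trace) μ ∧
      ∫ ω, (M * A ω).trace ∂μ = (M * of fun i j => ∫ ω, A ω i j ∂μ).trace := by
  have h : ∀ i j, Integrable (fun ω => Mᵀ i j * A ω i j) μ := fun i j => (hA i j).const_mul _
  rw [← transpose_transpose M]
  refine ⟨integrable_trace_transpose_mul (A := fun _ => Mᵀ) h, ?_⟩
  rw [integral_trace_transpose_mul (A := fun _ => Mᵀ) h, trace_transpose_mul_eq_sum]
  simp only [integral_const_mul, of_apply]

lemma norm_apply_le_of_frobeniusNorm_le {D : Matrix (Fin m) (Fin n) ℝ} {c : ℝ}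
    (h : frobeniusNorm D ≤ c) (i : Fin m) (j : Fin n) : ‖D i j‖ ≤ c :=
  (Real.norm_eq_abs _).trans_le ((abs_apply_le_frobeniusNorm D i j).trans h)

lemma integrable_mul_apply_of_frobeniusNorm_le {g d : Ω → Matrix (Fin m) (Fin n) ℝ}
    (hg : ∀ i j, Integrable (fun ω => g ω i j) μ)
    (hd : ∀ i j, AEStronglyMeasurable (fun ω => d ω i j) μ) {c : ℝ}
    (hdc : ∀ᵐ ω ∂μ, frobeniusNorm (d ω) ≤ c) (i : Fin m) (j : Fin n) :
    Integrable (fun ω => g ω i j * d ω i j) μ :=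
  (hg i j).mul_bdd (hd i j) (hdc.mono fun _ h => norm_apply_le_of_frobeniusNorm_le h i j)

lemma integral_condExp_mul_of_ae_bound [IsFiniteMeasure μ] {m₁ : MeasurableSpace Ω} (hm : m₁ ≤ mΩ)
    {g d : Ω → ℝ} (hg : Integrable g μ) (hd : StronglyMeasurable[m₁] d) {c : ℝ}
    (hdc : ∀ᵐ ω ∂μ, ‖d ω‖ ≤ c) :
    ∫ ω, (μ[g | m₁]) ω * d ω ∂μ = ∫ ω, g ω * d ω ∂μ := by
  calc ∫ ω, (μ[g | m₁]) ω * d ω ∂μ = ∫ ω, (μ[d * g | m₁]) ω ∂μ := by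
        refine integral_congr_ae ?_
        filter_upwards [condExp_stronglyMeasurable_mul_of_bound hm hd hg c hdc] with ω h
        rw [h, Pi.mul_apply, mul_comm]
    _ = ∫ ω, g ω * d ω ∂μ := by
        rw [integral_condExp hm]; simp only [Pi.mul_apply, mul_comm]

/-- Taking expectations in the subgradient inequality at `Y`: since `X - Y` is `m₁`-measurable
and bounded, the conditional expectation of the stochastic gradient may be replaced by the
gradient itself. -/
lemma integral_le_add_integral_trace_of_condExp_subgradient [IsProbabilityMeasure μ]
    {m₁ : MeasurableSpace Ω} (hm : m₁ ≤ mΩ) {f : Matrix (Fin m) (Fin n) ℝ → ℝ}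
    {X g : Ω → Matrix (Fin m) (Fin n) ℝ}
    {Y : Matrix (Fin m) (Fin n) ℝ} {c : ℝ} (hX : ∀ i j, Measurable[m₁] fun ω => X ω i j)
    (hXY : ∀ᵐ ω ∂μ, frobeniusNorm (X ω - Y) ≤ c) (hg : ∀ i j, Integrable (fun ω => g ω i j) μ)
    (hf : Integrable (fun ω => f (X ω)) μ)
    (hsub : ∀ᵐ ω ∂μ, f (X ω) +
      ((of fun i j => (μ[fun ω' => g ω' i j | m₁]) ω)ᵀ * (Y - X ω)).trace ≤ f Y) :
    ∫ ω, f (X ω) ∂μ ≤ f Y + ∫ ω, ((g ω)ᵀ * (X ω - Y)).trace ∂μ := by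
  set ĝ : Ω → Matrix (Fin m) (Fin n) ℝ := fun ω => of fun i j => (μ[fun ω' => g ω' i j | m₁]) ω
  have hd : ∀ i j, StronglyMeasurable[m₁] fun ω => (X ω - Y) i j := fun i j =>
    ((hX i j).sub measurable_const).stronglyMeasurable
  have hdc : ∀ i j, ∀ᵐ ω ∂μ, ‖(X ω - Y) i j‖ ≤ c := fun i j =>
    hXY.mono fun _ h => norm_apply_le_of_frobeniusNorm_le h i j
  have hint := integrable_mul_apply_of_frobeniusNorm_le hg
    (fun i j => ((hd i j).mono hm).aestronglyMeasurable) hXY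
  have hint' := integrable_mul_apply_of_frobeniusNorm_le (g := ĝ) (fun _ _ => integrable_condExp)
    (fun i j => ((hd i j).mono hm).aestronglyMeasurable) hXY
  have hswap : ∫ ω, ((ĝ ω)ᵀ * (X ω - Y)).trace ∂μ = ∫ ω, ((g ω)ᵀ * (X ω - Y)).trace ∂μ := by
    rw [integral_trace_transpose_mul hint', integral_trace_transpose_mul hint]
    exact Finset.sum_congr rfl fun i _ => Finset.sum_congr rfl fun j _ =>
      integral_condExp_mul_of_ae_bound hm (hg i j) (hd i j) (hdc i j)
  calc ∫ ω, f (X ω) ∂μ ≤ ∫ ω, (f Y + ((ĝ ω)ᵀ * (X ω - Y)).trace) ∂μ := by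
        refine integral_mono_ae hf ((integrable_const _).add (integrable_trace_transpose_mul hint'))
          (hsub.mono fun ω h => ?_)
        rw [← neg_sub, Matrix.mul_neg, trace_neg] at h
        linarith
    _ = f Y + ∫ ω, ((g ω)ᵀ * (X ω - Y)).trace ∂μ := by
        rw [integral_add (integrable_const _) (integrable_trace_transpose_mul hint'), hswap]
        simp

/-- Pointwise `tr √A ≤ (tr(B⁻¹A) + tr B)/2`; after taking expectations, `E A ⪯ B²` bounds the
right side by `tr B`. -/
lemma integral_trace_psdSqrt_le [IsProbabilityMeasure μ] {A : Ω → Matrix (Fin k) (Fin k) ℝ}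
    (hA : ∀ ω, (A ω).PosSemidef) (hAint : ∀ i j, Integrable (fun ω => A ω i j) μ)
    {B : Matrix (Fin k) (Fin k) ℝ} (hB : B.PosDef)
    (hAB : (B * B - of fun i j => ∫ ω, A ω i j ∂μ).PosSemidef) :
    ∫ ω, (psdSqrt (A ω)).trace ∂μ ≤ B.trace := by
  obtain ⟨hint, hEq⟩ := integral_trace_mul_left B⁻¹ hAint
  have hE : (B⁻¹ * of fun i j => ∫ ω, A ω i j ∂μ).trace ≤ B.trace := by
    have := hB.inv.posSemidef.trace_mul_le_trace_mul hAB
    rwa [nonsing_inv_mul_cancel_left B _ hB.det_pos.ne'.isUnit] at this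
  calc ∫ ω, (psdSqrt (A ω)).trace ∂μ ≤ ∫ ω, ((B⁻¹ * A ω).trace + B.trace) / 2 ∂μ :=
        integral_mono_of_nonneg (.of_forall fun ω => (hA ω).psdSqrt.trace_nonneg)
          ((hint.add (integrable_const _)).div_const 2)
          (.of_forall fun ω => trace_psdSqrt_le (hA ω) hB)
    _ ≤ B.trace := by
        rw [integral_div, integral_add hint (integrable_const _), hEq]
        simp only [integral_const, probReal_univ, one_smul]
        linarith

lemma smul_mul_self_sub_integral_sum_posSemidef {T : ℕ} {A : ℕ → Ω → Matrix ι ι ℝ}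
    (hA : ∀ t i j, Integrable (fun ω => A t ω i j) μ) {Q : Matrix ι ι ℝ}
    (hQ : ∀ t < T, (Q * Q - of fun i j => ∫ ω, A t ω i j ∂μ).PosSemidef) :
    ((T : ℝ) • (Q * Q) - of fun i j => ∫ ω, (∑ t ∈ Finset.range T, A t ω) i j ∂μ).PosSemidef := by
  have h : (T : ℝ) • (Q * Q) - (of fun i j => ∫ ω, (∑ t ∈ Finset.range T, A t ω) i j ∂μ)
      = ∑ t ∈ Finset.range T, (Q * Q - of fun i j => ∫ ω, A t ω i j ∂μ) := by
    rw [Finset.sum_sub_distrib, Finset.sum_const, Finset.card_range, Nat.cast_smul_eq_nsmul]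
    congr 1
    ext i j
    simp only [of_apply, Matrix.sum_apply]
    exact integral_finsetSum _ fun t _ => hA t i j
  rw [h]
  exact posSemidef_sum _ fun t ht => hQ t (Finset.mem_range.mp ht)

lemma integral_trace_psdSqrt_sum_le [IsProbabilityMeasure μ] {T : ℕ} (hT : 0 < T)
    {G : ℕ → Ω → Matrix (Fin m) (Fin n) ℝ}
    (hG : ∀ t i j, Integrable (fun ω => (G t ω * (G t ω)ᵀ) i j) μ)
    {Q : Matrix (Fin m) (Fin m) ℝ} (hQ : Q.PosDef)
    (hQG : ∀ t < T, (Q * Q - of fun i j => ∫ ω, (G t ω * (G t ω)ᵀ) i j ∂μ).PosSemidef) :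
    ∫ ω, (psdSqrt (∑ t ∈ Finset.range T, G t ω * (G t ω)ᵀ)).trace ∂μ
      ≤ Real.sqrt T * Q.trace := by
  have hT' : (0 : ℝ) < T := Nat.cast_pos.mpr hT
  have := integral_trace_psdSqrt_le (μ := μ) (fun ω => posSemidef_sum_mul_transpose (G · ω) T)
    (fun i j => ?_) (hQ.smul (Real.sqrt_pos.mpr hT')) ?_
  · rwa [trace_smul, smul_eq_mul] at this
  · simp only [Matrix.sum_apply]
    exact integrable_finsetSum _ fun t _ => hG t i j
  · rw [smul_mul_smul_comm, ← sq, Real.sq_sqrt hT'.le]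
    exact smul_mul_self_sub_integral_sum_posSemidef hG hQG

lemma sum_integral_le_of_ae_regret_le [IsProbabilityMeasure μ] (ℱ : Filtration ℕ mΩ) {T : ℕ}
    {f : Matrix (Fin m) (Fin n) ℝ → ℝ}
    {Wstar : Matrix (Fin m) (Fin n) ℝ} {W G : ℕ → Ω → Matrix (Fin m) (Fin n) ℝ} {DF a b : ℝ}
    {R : Ω → ℝ} (hW : ∀ t i j, Measurable[ℱ t] fun ω => W t ω i j)
    (hG : ∀ t i j, Integrable (fun ω => G t ω i j) μ)
    (hsub : ∀ t < T, ∀ᵐ ω ∂μ, ∀ Y : Matrix (Fin m) (Fin n) ℝ, f (W t ω) +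
      ((of fun i j => (μ[fun ω' => G t ω' i j | ℱ t]) ω)ᵀ * (Y - W t ω)).trace ≤ f Y)
    (hfr : ∀ t < T, ∀ᵐ ω ∂μ, frobeniusNorm (W t ω - Wstar) ≤ DF)
    (hf : ∀ t < T, Integrable (fun ω => f (W t ω)) μ) (hR : Integrable R μ)
    (hregret : ∀ᵐ ω ∂μ, ∑ t ∈ Finset.range T, ((G t ω)ᵀ * (W t ω - Wstar)).trace ≤ a * R ω + b) :
    ∑ t ∈ Finset.range T, ∫ ω, f (W t ω) ∂μ ≤ T * f Wstar + (a * ∫ ω, R ω ∂μ + b) := by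
  have hint : ∀ t ∈ Finset.range T,
      Integrable (fun ω => ((G t ω)ᵀ * (W t ω - Wstar)).trace) μ := fun t ht =>
    integrable_trace_transpose_mul <| integrable_mul_apply_of_frobeniusNorm_le (hG t)
      (fun i j => (((hW t i j).mono (ℱ.le t) le_rfl).sub measurable_const).aestronglyMeasurable)
      (hfr t (Finset.mem_range.mp ht))
  calc ∑ t ∈ Finset.range T, ∫ ω, f (W t ω) ∂μ
      ≤ ∑ t ∈ Finset.range T, (f Wstar + ∫ ω, ((G t ω)ᵀ * (W t ω - Wstar)).trace ∂μ) :=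
        Finset.sum_le_sum fun t ht => integral_le_add_integral_trace_of_condExp_subgradient
          (ℱ.le t) (hW t) (hfr t (Finset.mem_range.mp ht)) (hG t) (hf t (Finset.mem_range.mp ht))
          (by filter_upwards [hsub t (Finset.mem_range.mp ht)] with ω h using h Wstar)
    _ = T * f Wstar + ∫ ω, ∑ t ∈ Finset.range T, ((G t ω)ᵀ * (W t ω - Wstar)).trace ∂μ := by
        rw [Finset.sum_add_distrib, integral_finsetSum _ hint]
        simp
    _ ≤ T * f Wstar + ∫ ω, (a * R ω + b) ∂μ :=
        add_le_add le_rfl (integral_mono_ae (integrable_finsetSum _ hint)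
          ((hR.const_mul _).add (integrable_const _)) hregret)
    _ = T * f Wstar + (a * ∫ ω, R ω ∂μ + b) := by
        rw [integral_add (hR.const_mul _) (integrable_const _), integral_const_mul,
          integral_const]
        simp

namespace ASGO

/-- The ASGO preconditioner built from the first `t` gradients; it is `Λ_{t-1}` in the paper's
indexing, with `Λ_{-1} = ε I`. -/
noncomputable def precond (ε : ℝ) (G : ℕ → Matrix (Fin m) (Fin n) ℝ) (t : ℕ) :
    Matrix (Fin m) (Fin m) ℝ :=
  psdSqrt (∑ s ∈ Finset.range t, G s * (G s)ᵀ) + ε • 1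

section Preconditioner

variable {ε : ℝ} (G : ℕ → Matrix (Fin m) (Fin n) ℝ)

lemma precond_posDef (hε : 0 < ε) (t : ℕ) : (precond ε G t).PosDef :=
  PosDef.posSemidef_add (posSemidef_sum_mul_transpose G t).psdSqrt (PosDef.one.smul hε)

lemma precond_succ_sub_posSemidef (t : ℕ) : (precond ε G (t + 1) - precond ε G t).PosSemidef := by
  rw [precond, precond, add_sub_add_right_eq_sub]
  refine psdSqrt_sub_psdSqrt (posSemidef_sum_mul_transpose G t) ?_
  rw [Finset.sum_range_succ, add_sub_cancel_left]
  exact posSemidef_mul_transpose_self (G t)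

lemma precond_mul_self (t : ℕ) : precond ε G t * precond ε G t
    = ∑ s ∈ Finset.range t, G s * (G s)ᵀ
      + (2 * ε) • psdSqrt (∑ s ∈ Finset.range t, G s * (G s)ᵀ) + (ε * ε) • 1 := by
  simp only [precond, Matrix.add_mul, Matrix.mul_add, Matrix.smul_mul, Matrix.mul_smul,
    Matrix.one_mul, Matrix.mul_one, psdSqrt_mul_self (posSemidef_sum_mul_transpose G t)]
  module

/-- `Λ_t² - Λ_{t-1}² - G_t G_tᵀ = 2 ε (Λ_t - Λ_{t-1})`. -/
lemma precond_succ_mul_self_sub_posSemidef (hε : 0 ≤ ε) (t : ℕ) :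
    (precond ε G (t + 1) * precond ε G (t + 1) - precond ε G t * precond ε G t
      - G t * (G t)ᵀ).PosSemidef := by
  have h := (precond_succ_sub_posSemidef (ε := ε) G t).smul (mul_nonneg zero_le_two hε)
  convert h using 1
  rw [precond_mul_self, precond_mul_self, precond, precond, Finset.sum_range_succ]
  module

lemma trace_precond_sub_trace_precond_zero (t : ℕ) :
    (precond ε G t).trace - (precond ε G 0).trace
      = (psdSqrt (∑ s ∈ Finset.range t, G s * (G s)ᵀ)).trace := by
  simp [precond, psdSqrt_zero]

end Preconditioner

/-- The potential `tr(D_tᵀ Λ_{t-1} D_t) - 3η² tr Λ_{t-1}` decreases by at least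
`2η tr(G_tᵀ D_t)` in each step. -/
theorem sum_trace_transpose_mul_le {T : ℕ} {ε η DF : ℝ} (hε : 0 < ε) (hη : 0 < η)
    (G D : ℕ → Matrix (Fin m) (Fin n) ℝ)
    (hD : ∀ t, D (t + 1) = D t - η • ((precond ε G (t + 1))⁻¹ * G t))
    (hop : ∀ t < T, matSpectralNorm (D t) ≤ η) (hF : frobeniusNorm (D 0) ≤ DF) :
    ∑ t ∈ Finset.range T, ((G t)ᵀ * D t).trace
      ≤ 3 / 2 * η * (psdSqrt (∑ s ∈ Finset.range T, G s * (G s)ᵀ)).trace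
        + ε * DF ^ 2 / (2 * η) := by
  set Φ : ℕ → ℝ := fun t =>
    (((D t)ᵀ * precond ε G t * D t).trace - 3 * η ^ 2 * (precond ε G t).trace)
  have hstep : ∀ t < T, 2 * η * ((G t)ᵀ * D t).trace ≤ Φ t - Φ (t + 1) := fun t ht => by
    simpa only [Φ, hD t] using two_mul_trace_transpose_mul_le (precond_posDef G hε (t + 1))
      (precond_posDef G hε t).isHermitian (precond_succ_sub_posSemidef G t)
      (precond_succ_mul_self_sub_posSemidef G hε.le t) (hop t ht)
  have hsum : 2 * η * ∑ t ∈ Finset.range T, ((G t)ᵀ * D t).trace ≤ Φ 0 - Φ T := by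
    rw [Finset.mul_sum, ← Finset.sum_range_sub']
    exact Finset.sum_le_sum fun t ht => hstep t (Finset.mem_range.mp ht)
  have hΦ0 : ((D 0)ᵀ * precond ε G 0 * D 0).trace ≤ ε * DF ^ 2 := by
    rw [precond, Finset.sum_range_zero, psdSqrt_zero, zero_add, Matrix.mul_smul, Matrix.mul_one,
      Matrix.smul_mul, trace_smul, smul_eq_mul, trace_transpose_mul_self_eq_frobeniusNorm_sq]
    have : 0 ≤ frobeniusNorm (D 0) := Real.sqrt_nonneg _
    gcongr
  have hΦT := ((precond_posDef G hε T).posSemidef.transpose_mul_mul_same (D T)).trace_nonneg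
  have htr := trace_precond_sub_trace_precond_zero (ε := ε) G T
  refine le_of_mul_le_mul_left ?_ (by positivity : 0 < 2 * η)
  calc _ ≤ Φ 0 - Φ T := hsum
    _ ≤ 3 * η ^ 2 * (psdSqrt (∑ s ∈ Finset.range T, G s * (G s)ᵀ)).trace + ε * DF ^ 2 := by
      rw [← htr]; linarith
    _ = _ := by field_simp

lemma ae_sum_trace_transpose_mul_le {T : ℕ} {ε η DF : ℝ} (hε : 0 < ε) (hη : 0 < η)
    {Wstar : Matrix (Fin m) (Fin n) ℝ}
    {W G : ℕ → Ω → Matrix (Fin m) (Fin n) ℝ} {Λ : ℕ → Ω → Matrix (Fin m) (Fin m) ℝ}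
    (hΛ : ∀ t ω, Λ t ω = psdSqrt (∑ s ∈ Finset.range (t + 1), G s ω * (G s ω)ᵀ) + ε • 1)
    (hW : ∀ t ω, W (t + 1) ω = W t ω - η • ((Λ t ω)⁻¹ * G t ω))
    (hop : ∀ t < T, ∀ᵐ ω ∂μ, matSpectralNorm (W t ω - Wstar) ≤ η)
    (hfr : ∀ᵐ ω ∂μ, frobeniusNorm (W 0 ω - Wstar) ≤ DF) :
    ∀ᵐ ω ∂μ, ∑ t ∈ Finset.range T, ((G t ω)ᵀ * (W t ω - Wstar)).trace
      ≤ 3 / 2 * η * (psdSqrt (∑ t ∈ Finset.range T, G t ω * (G t ω)ᵀ)).trace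
        + ε * DF ^ 2 / (2 * η) := by
  have hop' := (Filter.eventually_all_finset (Finset.range T)).2 fun t ht =>
    hop t (Finset.mem_range.mp ht)
  filter_upwards [hop', hfr] with ω hopω hfrω
  refine sum_trace_transpose_mul_le hε hη (G · ω) (W · ω - Wstar) (fun t => ?_)
    (fun t ht => hopω t (Finset.mem_range.mpr ht)) hfrω
  rw [hW, hΛ]
  exact sub_right_comm _ _ _

lemma average_sub_le_of_sum_le {T : ℕ} (hT : 0 < T) {S y E q ε D DF : ℝ} (hD : 0 < D)
    (hε : 0 ≤ ε) (hS : S ≤ T * y + (3 / 2 * D * E + ε * DF ^ 2 / (2 * D)))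
    (hE : E ≤ Real.sqrt T * q) :
    1 / (T : ℝ) * S - y ≤ 3 / 2 * (q * D / Real.sqrt T + ε * DF ^ 2 / (D * T)) := by
  have hT' : (0 : ℝ) < T := Nat.cast_pos.mpr hT
  have hsT := Real.sqrt_pos.mpr hT'
  have hTsq := Real.sq_sqrt hT'.le
  calc 1 / (T : ℝ) * S - y
      ≤ 1 / (T : ℝ) * (T * y + (3 / 2 * D * (Real.sqrt T * q) + ε * DF ^ 2 / (2 * D))) - y := by
        gcongr
        exact hS.trans (by gcongr)
    _ = 3 / 2 * (q * D / Real.sqrt T) + 1 / 2 * (ε * DF ^ 2 / (D * T)) := by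
        field_simp
        linear_combination 3 * D ^ 2 * q * hTsq
    _ ≤ _ := by
        have : 0 ≤ ε * DF ^ 2 / (D * T) := by positivity
        linarith

end ASGO

end

/-- Corollary 2: there is an absolute constant `C` such that, under the
setting of the ASGO nonsmooth convergence theorem (convex `f` with minimizer `W_*`,
stochastic subgradients `G_t` whose conditional expectation given the history is a
subgradient of `f` at `W_t`, updates `V_t = ∑_{s ≤ t} G_s G_sᵀ`, `Λ_t = V_t^{1/2} + ε I`,
`W_{t+1} = W_t - η Λ_t⁻¹ G_t` with `η = D_op`, and `‖W_t - W_*‖_op ≤ D_op`,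
`‖W_t - W_*‖_F ≤ D_F` almost surely), if in addition there is a symmetric positive
definite `Q` with `E[G_t G_tᵀ] ⪯ Q²` for every `t`, then
`(1/T) ∑_{t<T} E[f(W_t)] - f(W_*) ≤ C (‖Q‖_* D_op / √T + ε D_F² / (D_op T))`. -/
theorem stmt1 :
    ∃ C : ℝ, 0 < C ∧
      ∀ (m n T : ℕ), 0 < T →
      ∀ (Ω : Type) (mΩ : MeasurableSpace Ω) (μ : Measure Ω), IsProbabilityMeasure μ →
      ∀ (ℱ : Filtration ℕ mΩ)
        (f : Matrix (Fin m) (Fin n) ℝ → ℝ), ConvexOn ℝ Set.univ f →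
      ∀ (Wstar : Matrix (Fin m) (Fin n) ℝ), (∀ Y, f Wstar ≤ f Y) →
      ∀ (ε Dop DF : ℝ), 0 < ε → 0 < Dop →
      ∀ (W G : ℕ → Ω → Matrix (Fin m) (Fin n) ℝ)
        (Λ : ℕ → Ω → Matrix (Fin m) (Fin m) ℝ),
      (∀ t i j, Measurable[ℱ t] fun ω => W t ω i j) →
      (∀ t i j, Measurable fun ω => G t ω i j) →
      (∀ t i j, Integrable (fun ω => G t ω i j) μ) →
      (∀ t, t < T → ∀ᵐ ω ∂μ, ∀ Y : Matrix (Fin m) (Fin n) ℝ,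
        f (W t ω) +
          ((Matrix.of fun i j => (μ[fun ω' => G t ω' i j | ℱ t]) ω)ᵀ * (Y - W t ω)).trace
        ≤ f Y) →
      (∀ t ω, Λ t ω =
        psdSqrt (∑ s ∈ Finset.range (t + 1), G s ω * (G s ω)ᵀ) +
          ε • (1 : Matrix (Fin m) (Fin m) ℝ)) →
      (∀ t ω, W (t + 1) ω = W t ω - Dop • ((Λ t ω)⁻¹ * G t ω)) →
      (∀ t, t < T → ∀ᵐ ω ∂μ, matSpectralNorm (W t ω - Wstar) ≤ Dop) →
      (∀ t, t < T → ∀ᵐ ω ∂μ, frobeniusNorm (W t ω - Wstar) ≤ DF) →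
      (∀ t, t < T → Integrable (fun ω => f (W t ω)) μ) →
      Integrable
        (fun ω => nuclearNorm (psdSqrt (∑ t ∈ Finset.range T, G t ω * (G t ω)ᵀ))) μ →
      ∀ (Q : Matrix (Fin m) (Fin m) ℝ), Q.PosDef →
      (∀ t i j, Integrable (fun ω => (G t ω * (G t ω)ᵀ) i j) μ) →
      (∀ t, t < T →
        (Q * Q - Matrix.of fun i j => ∫ ω, (G t ω * (G t ω)ᵀ) i j ∂μ).PosSemidef) →
      (1 / (T : ℝ)) * (∑ t ∈ Finset.range T, ∫ ω, f (W t ω) ∂μ) - f Wstar ≤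
        C * (nuclearNorm Q * Dop / Real.sqrt T + ε * DF ^ 2 / (Dop * T)) := by
  refine ⟨3 / 2, by norm_num, ?_⟩
  intro m n T hT Ω mΩ μ _ ℱ f _ Wstar _ ε Dop DF hε hDop W G Λ hWmeas _ hGint hsub hΛ hW hop hfr
    hfint hnuc Q hQ hGGint hQb
  have hR : Integrable (fun ω => (psdSqrt (∑ t ∈ Finset.range T, G t ω * (G t ω)ᵀ)).trace) μ :=
    hnuc.congr (.of_forall fun ω => nuclearNorm_eq_trace
      (posSemidef_sum_mul_transpose (G · ω) T).psdSqrt)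
  have hsum := sum_integral_le_of_ae_regret_le ℱ hWmeas hGint hsub hfr hfint hR
    (ASGO.ae_sum_trace_transpose_mul_le hε hDop hΛ hW hop (hfr 0 hT))
  rw [nuclearNorm_eq_trace hQ.posSemidef]
  exact ASGO.average_sub_le_of_sum_le hT hDop hε.le hsum
    (integral_trace_psdSqrt_sum_le hT hGGint hQ hQb)
end

section
/- Let Λ', Λ ∈ R^{m×m} be symmetric positive definite matrices and G ∈ R^{m×n} a matrix such that Λ² = Λ'² + G Gᵀ. Then tr(Gᵀ Λ^{-1} G) ≤ 2 tr(Λ - Λ'). -/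
/-!
Completing the square: `(Λ - Λ') Λ⁻¹ (Λ - Λ')` is positive semidefinite, so its trace
`tr Λ - 2 tr Λ' + tr (Λ'² Λ⁻¹)` is nonnegative. On the other hand, cycling the trace and
substituting `G Gᵀ = Λ² - Λ'²` gives `tr (Gᵀ Λ⁻¹ G) = tr Λ - tr (Λ'² Λ⁻¹)`.
-/

open Matrix

namespace Matrix

variable {ι : Type*} [Fintype ι] [DecidableEq ι]

theorem two_mul_trace_le_trace_add_trace_mul_mul_inv {Λ Λ' : Matrix ι ι ℝ}
    (hΛ : Λ.PosDef) (hΛ' : Λ'.IsHermitian) :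
    2 * Λ'.trace ≤ Λ.trace + (Λ' * Λ' * Λ⁻¹).trace := by
  have hdet : IsUnit Λ.det := hΛ.det_pos.ne'.isUnit
  have hsq : 0 ≤ ((Λ - Λ') * Λ⁻¹ * (Λ - Λ')ᴴ).trace :=
    (hΛ.inv.posSemidef.mul_mul_conjTranspose_same _).trace_nonneg
  have hexpand : ((Λ - Λ') * Λ⁻¹ * (Λ - Λ')ᴴ).trace
      = Λ.trace - 2 * Λ'.trace + (Λ' * Λ' * Λ⁻¹).trace := by
    rw [(hΛ.isHermitian.sub hΛ').eq]
    have e : (Λ - Λ') * Λ⁻¹ * (Λ - Λ')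
        = Λ * Λ⁻¹ * Λ - Λ * Λ⁻¹ * Λ' - Λ' * (Λ⁻¹ * Λ) + Λ' * Λ⁻¹ * Λ' := by
      noncomm_ring
    rw [e, nonsing_inv_mul Λ hdet, mul_nonsing_inv Λ hdet]
    simp only [Matrix.one_mul, Matrix.mul_one, trace_add, trace_sub,
      trace_mul_cycle Λ' Λ⁻¹ Λ']
    ring
  linarith

theorem trace_transpose_mul_inv_mul_of_mul_self_eq {κ : Type*} [Fintype κ]
    {Λ Λ' : Matrix ι ι ℝ} (hΛ : IsUnit Λ.det) {G : Matrix ι κ ℝ}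
    (h : Λ * Λ = Λ' * Λ' + G * Gᵀ) :
    (Gᵀ * Λ⁻¹ * G).trace = Λ.trace - (Λ' * Λ' * Λ⁻¹).trace := by
  have hGG : G * Gᵀ = Λ * Λ - Λ' * Λ' := by rw [h]; abel
  rw [trace_mul_cycle, hGG, Matrix.sub_mul, trace_sub, Matrix.mul_assoc,
    mul_nonsing_inv Λ hΛ, Matrix.mul_one]

end Matrix

/-- if `Λ', Λ ∈ ℝ^{m×m}` are symmetric positive definite and
`G ∈ ℝ^{m×n}` satisfies `Λ² = Λ'² + G Gᵀ`, then `tr(Gᵀ Λ⁻¹ G) ≤ 2 tr(Λ - Λ')`. -/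
theorem stmt12 (m n : ℕ) (Λ' Λ : Matrix (Fin m) (Fin m) ℝ)
    (hΛ' : Λ'.PosDef) (hΛ : Λ.PosDef)
    (G : Matrix (Fin m) (Fin n) ℝ) (h : Λ * Λ = Λ' * Λ' + G * Gᵀ) :
    (Gᵀ * Λ⁻¹ * G).trace ≤ 2 * (Λ - Λ').trace := by
  have hamgm := two_mul_trace_le_trace_add_trace_mul_mul_inv hΛ hΛ'.isHermitian
  rw [trace_transpose_mul_inv_mul_of_mul_self_eq hΛ.det_pos.ne'.isUnit h, trace_sub]
  linarith
end
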